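/- Let $\bar C$ be the completion of the coefficient matrix $C$ with respect to a possible context $\{X_K=x_K\}$ with constant-node set $K^\ast$, defined by $\bar c_{ij}=x_i/x_j$ if $i,j\in K^\ast$ and $\bar c_{ij}=c_{ij}$ otherwise. Then the maximum cycle mean of $\bar C$ equals $1$. -/

import Mathlib

open scoped NNReal

noncomputable section

/-- Max-times matrix-vector product: `(A ⊙ x) i = max_j (A i j * x j)`. -/
def maxMul {d : ℕ} (A : Matrix (Fin d) (Fin d) ℝ≥0) (x : Fin d → ℝ≥0) : Fin d → ℝ≥0 :=
  fun i => Finset.univ.sup fun j => A i j * x j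

/-- Max-times matrix product. -/
def maxMatMul {d : ℕ} (A B : Matrix (Fin d) (Fin d) ℝ≥0) : Matrix (Fin d) (Fin d) ℝ≥0 :=
  Matrix.of fun i j => Finset.univ.sup fun l => A i l * B l j

/-- Max-times matrix powers, with `A^{⊙0}` the identity matrix. -/
def maxPow {d : ℕ} (A : Matrix (Fin d) (Fin d) ℝ≥0) : ℕ → Matrix (Fin d) (Fin d) ℝ≥0
  | 0 => Matrix.of fun i j => if i = j then 1 else 0
  | k + 1 => maxMatMul A (maxPow A k)

/-- Kleene star `C^* = I ∨ C ∨ C^{⊙2} ∨ ⋯ ∨ C^{⊙(d-1)}` over the max-times semiring. -/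
def kleene {d : ℕ} (C : Matrix (Fin d) (Fin d) ℝ≥0) : Matrix (Fin d) (Fin d) ℝ≥0 :=
  Matrix.of fun i j => (Finset.range d).sup fun k => maxPow C k i j

/-- The support digraph of `C` (edge `j → i` iff `C i j ≠ 0`) has no directed cycle. -/
def SupportAcyclic {d : ℕ} (C : Matrix (Fin d) (Fin d) ℝ≥0) : Prop :=
  ¬ ∃ (r : ℕ) (c : Fin (r + 1) → Fin d), Function.Injective c ∧ ∀ t, C (c (t + 1)) (c t) ≠ 0

/-- Weight of the directed cycle `c 0 → c 1 → ⋯ → c r → c 0`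
(the edge `j → i` contributes the entry `A i j`). -/
def cycleWeight {d : ℕ} (A : Matrix (Fin d) (Fin d) ℝ≥0) {r : ℕ}
    (c : Fin (r + 1) → Fin d) : ℝ≥0 :=
  ∏ t, A (c (t + 1)) (c t)

/-- Maximum cycle mean: the supremum of the geometric means of the weights of
(simple) directed cycles of the digraph of `A`; it is `0` when this digraph is acyclic. -/
noncomputable def maxCycleMean {d : ℕ} (A : Matrix (Fin d) (Fin d) ℝ≥0) : ℝ≥0 :=
  sSup {m | ∃ (r : ℕ) (c : Fin (r + 1) → Fin d),
    Function.Injective c ∧ m = cycleWeight A c ^ (((r : ℝ) + 1)⁻¹)}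

/-- The completion of `C` with respect to a context with constant-node set `Ks` and constant
values `x`: `c̄_{ij} = x i / x j` if `i, j ∈ Ks`, and `c̄_{ij} = c_{ij}` otherwise. -/
def completionMatrix {d : ℕ} (C : Matrix (Fin d) (Fin d) ℝ≥0) (Ks : Finset (Fin d))
    (x : Fin d → ℝ≥0) : Matrix (Fin d) (Fin d) ℝ≥0 :=
  Matrix.of fun i j => if i ∈ Ks ∧ j ∈ Ks then x i / x j else C i j

/-!
The vector `y = C^* ⊙ x`, built from the constants only, agrees with `x` on `K^*` (this is
feasibility) and is a subeigenvector of the completion: `c̄_{ij} y_j ≤ y_i`. On the `K^*`-block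
this is an equality, and elsewhere it is the absorption `C ⊙ C^* ≤ C^*`, which holds because an
acyclic `C` is nilpotent. Multiplying the inequalities around a cycle that meets `K^*`, where
`y` is positive, bounds its weight by `1`; a cycle avoiding `K^*` is a cycle of `C` and so has
weight `0`. The self-loop at a constant node has weight `x_k / x_k = 1`.
-/

theorem exists_injective_cycle_of_closed_walk {α : Type*} (R : α → α → Prop) (w : ℕ → α)
    {a g : ℕ} (hg : 0 < g) (hclosed : w (a + g) = w a)
    (hR : ∀ t < g, R (w (a + t + 1)) (w (a + t))) :
    ∃ (r : ℕ) (c : Fin (r + 1) → α), Function.Injective c ∧ ∀ t, R (c (t + 1)) (c t) := by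
  induction g using Nat.strong_induction_on generalizing a with
  | _ g ih =>
  obtain ⟨r, rfl⟩ : ∃ r, g = r + 1 := ⟨g - 1, by omega⟩
  by_cases hinj : Function.Injective fun t : Fin (r + 1) => w (a + t)
  · refine ⟨r, _, hinj, fun t => ?_⟩
    rw [Fin.val_add_one]
    split_ifs with ht
    · simpa [ht, ← hclosed, add_assoc] using hR r (by omega)
    · simpa [add_assoc] using hR t (by omega)
  · obtain ⟨s, t, hst, hne⟩ : ∃ s t : Fin (r + 1), w (a + s) = w (a + t) ∧ s ≠ t := by
      simpa [Function.Injective] using hinj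
    wlog hlt : s < t generalizing s t
    · exact this t s hst.symm hne.symm (lt_of_le_of_ne (not_lt.mp hlt) hne.symm)
    refine ih (t - s) (by omega) (a := a + s) (by omega) ?_ ?_
    · rw [hst]; congr 1; omega
    · intro u hu; simpa [add_assoc] using hR (s + u) (by omega)

theorem Fin.forall_of_add_one_closed {n : ℕ} {p : Fin (n + 1) → Prop} {t₀ : Fin (n + 1)}
    (h₀ : p t₀) (hstep : ∀ t, p t → p (t + 1)) (t : Fin (n + 1)) : p t := by
  open Fin.NatCast in
  have hiter : ∀ m : ℕ, p (t₀ + m) := by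
    intro m
    induction m with
    | zero => simpa using h₀
    | succ m ih => simpa [add_assoc] using hstep _ ih
  simpa using hiter (t - t₀).val

section MaxTimes

variable {d : ℕ}

theorem exists_walk_of_maxPow_ne_zero (C : Matrix (Fin d) (Fin d) ℝ≥0) {k : ℕ} {i j : Fin d}
    (h : maxPow C k i j ≠ 0) :
    ∃ w : ℕ → Fin d, w 0 = j ∧ w k = i ∧ ∀ t < k, C (w (t + 1)) (w t) ≠ 0 := by
  induction k generalizing i with
  | zero =>
    obtain rfl : i = j := by by_contra hij; simp [maxPow, hij] at h
    exact ⟨fun _ => i, rfl, rfl, by omega⟩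
  | succ k ih =>
    obtain ⟨l, hCl, hl⟩ : ∃ l, C i l ≠ 0 ∧ maxPow C k l j ≠ 0 := by
      simpa [maxPow, maxMatMul, Finset.sup_eq_bot_iff, not_or] using h
    obtain ⟨w, hw0, hwk, hw⟩ := ih hl
    refine ⟨fun t => if t ≤ k then w t else i, by simp [hw0], by simp, fun t ht => ?_⟩
    rcases Nat.lt_or_ge t k with htk | htk
    · simpa [htk.le, Nat.succ_le_of_lt htk] using hw t htk
    · obtain rfl : t = k := by omega
      simpa [hwk] using hCl

theorem maxPow_eq_zero_of_supportAcyclic {C : Matrix (Fin d) (Fin d) ℝ≥0}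
    (hC : SupportAcyclic C) (i j : Fin d) : maxPow C d i j = 0 := by
  by_contra h
  obtain ⟨w, -, -, hw⟩ := exists_walk_of_maxPow_ne_zero C h
  have no_repeat : ∀ a b : Fin (d + 1), a < b → w a ≠ w b := fun a b hab hrep =>
    hC <| exists_injective_cycle_of_closed_walk (fun i j => C i j ≠ 0) w
      (a := a) (g := b - a) (by omega) (by rw [hrep]; congr 1; omega)
      (fun t ht => hw (a + t) (by omega))
  obtain ⟨a, b, hab, hrep⟩ :=
    Fintype.exists_ne_map_eq_of_card_lt (fun t : Fin (d + 1) => w t) (by simp)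
  rcases hab.lt_or_gt with hlt | hlt
  exacts [no_repeat a b hlt hrep, no_repeat b a hlt hrep.symm]

theorem one_le_kleene_apply_self (C : Matrix (Fin d) (Fin d) ℝ≥0) (i : Fin d) :
    1 ≤ kleene C i i := by
  calc 1 = maxPow C 0 i i := by simp [maxPow]
    _ ≤ kleene C i i :=
      Finset.le_sup (f := fun k => maxPow C k i i) (Finset.mem_range.mpr i.pos)

theorem mul_kleene_le_kleene {C : Matrix (Fin d) (Fin d) ℝ≥0} (hC : SupportAcyclic C)
    (i j l : Fin d) : C i j * kleene C j l ≤ kleene C i l := by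
  simp only [kleene, Matrix.of_apply, NNReal.mul_finset_sup]
  refine Finset.sup_le fun k hk => ?_
  have hstep : C i j * maxPow C k j l ≤ maxPow C (k + 1) i l :=
    Finset.le_sup (f := fun m => C i m * maxPow C k m l) (Finset.mem_univ j)
  rcases Nat.lt_or_ge (k + 1) d with hlt | hge
  · exact hstep.trans (Finset.le_sup (f := fun k => maxPow C k i l) (Finset.mem_range.mpr hlt))
  · obtain rfl : k + 1 = d := by have := Finset.mem_range.mp hk; omega
    rw [maxPow_eq_zero_of_supportAcyclic hC] at hstep
    exact hstep.trans zero_le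

theorem cycleWeight_le_one_of_subeigenvector {A : Matrix (Fin d) (Fin d) ℝ≥0} {y : Fin d → ℝ≥0}
    (hy : ∀ i j, A i j * y j ≤ y i) {r : ℕ} (c : Fin (r + 1) → Fin d) {t₀ : Fin (r + 1)}
    (h₀ : 0 < y (c t₀)) : cycleWeight A c ≤ 1 := by
  by_cases hw : cycleWeight A c = 0
  · simp [hw]
  have hedge : ∀ t, A (c (t + 1)) (c t) ≠ 0 := fun t h =>
    hw (Finset.prod_eq_zero (Finset.mem_univ t) h)
  have hpos : ∀ t, 0 < y (c t) := Fin.forall_of_add_one_closed h₀ fun t ht =>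
    (mul_pos (pos_iff_ne_zero.mpr (hedge t)) ht).trans_le (hy _ _)
  have hprod : cycleWeight A c * ∏ t, y (c t) ≤ 1 * ∏ t, y (c t) :=
    calc cycleWeight A c * ∏ t, y (c t) = ∏ t, A (c (t + 1)) (c t) * y (c t) := by
          rw [cycleWeight, ← Finset.prod_mul_distrib]
      _ ≤ ∏ t, y (c (t + 1)) := Finset.prod_le_prod' fun t _ => hy _ _
      _ = 1 * ∏ t, y (c t) := by
          rw [one_mul]; exact Equiv.prod_comp (Equiv.addRight 1) (fun t => y (c t))
  exact le_of_mul_le_mul_right hprod (Finset.prod_pos fun t _ => hpos t)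

theorem maxCycleMean_eq_one {A : Matrix (Fin d) (Fin d) ℝ≥0}
    (hle : ∀ (r : ℕ) (c : Fin (r + 1) → Fin d), Function.Injective c → cycleWeight A c ≤ 1)
    {k : Fin d} (hk : A k k = 1) : maxCycleMean A = 1 := by
  have hloop : (1 : ℝ≥0) ∈ {m | ∃ (r : ℕ) (c : Fin (r + 1) → Fin d),
      Function.Injective c ∧ m = cycleWeight A c ^ (((r : ℝ) + 1)⁻¹)} :=
    ⟨0, fun _ => k, fun a b _ => Fin.ext (by omega), by simp [cycleWeight, hk]⟩
  have hbound : ∀ m ∈ {m | ∃ (r : ℕ) (c : Fin (r + 1) → Fin d),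
      Function.Injective c ∧ m = cycleWeight A c ^ (((r : ℝ) + 1)⁻¹)}, m ≤ 1 := by
    rintro m ⟨r, c, hc, rfl⟩
    exact NNReal.rpow_le_one (hle r c hc) (by positivity)
  exact le_antisymm (csSup_le ⟨1, hloop⟩ hbound) (le_csSup ⟨1, hbound⟩ hloop)

def kleeneExtension (C : Matrix (Fin d) (Fin d) ℝ≥0) (Ks : Finset (Fin d)) (x : Fin d → ℝ≥0)
    (i : Fin d) : ℝ≥0 :=
  Ks.sup fun l => kleene C i l * x l

section Completion

variable {C : Matrix (Fin d) (Fin d) ℝ≥0} {Ks : Finset (Fin d)} {x : Fin d → ℝ≥0}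

theorem kleeneExtension_of_mem (hfeas : ∀ r ∈ Ks, ∀ l ∈ Ks, kleene C r l * x l ≤ x r)
    {i : Fin d} (hi : i ∈ Ks) : kleeneExtension C Ks x i = x i := by
  refine le_antisymm (Finset.sup_le fun l hl => hfeas i hi l hl) ?_
  calc x i ≤ kleene C i i * x i := le_mul_of_one_le_left zero_le (one_le_kleene_apply_self C i)
    _ ≤ kleeneExtension C Ks x i := Finset.le_sup (f := fun l => kleene C i l * x l) hi

theorem completionMatrix_mul_kleeneExtension_le (hC : SupportAcyclic C) (hx : ∀ k ∈ Ks, 0 < x k)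
    (hfeas : ∀ r ∈ Ks, ∀ l ∈ Ks, kleene C r l * x l ≤ x r) (i j : Fin d) :
    completionMatrix C Ks x i j * kleeneExtension C Ks x j ≤ kleeneExtension C Ks x i := by
  by_cases hij : i ∈ Ks ∧ j ∈ Ks
  · rw [kleeneExtension_of_mem hfeas hij.1, kleeneExtension_of_mem hfeas hij.2]
    simp [completionMatrix, hij, div_mul_cancel₀ _ (hx j hij.2).ne']
  · simp only [completionMatrix, Matrix.of_apply, hij, if_false, kleeneExtension,
      NNReal.mul_finset_sup]
    refine Finset.sup_le fun l hl => ?_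
    calc C i j * (kleene C j l * x l) = C i j * kleene C j l * x l := (mul_assoc _ _ _).symm
      _ ≤ kleene C i l * x l := mul_le_mul_left (mul_kleene_le_kleene hC i j l) _
      _ ≤ _ := Finset.le_sup (f := fun l => kleene C i l * x l) hl

theorem cycleWeight_completionMatrix_le_one (hC : SupportAcyclic C) (hx : ∀ k ∈ Ks, 0 < x k)
    (hfeas : ∀ r ∈ Ks, ∀ l ∈ Ks, kleene C r l * x l ≤ x r) {r : ℕ} (c : Fin (r + 1) → Fin d)
    (hc : Function.Injective c) : cycleWeight (completionMatrix C Ks x) c ≤ 1 := by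
  by_cases hmeet : ∃ t, c t ∈ Ks
  · obtain ⟨t₀, ht₀⟩ := hmeet
    refine cycleWeight_le_one_of_subeigenvector
      (completionMatrix_mul_kleeneExtension_le hC hx hfeas) c (t₀ := t₀) ?_
    rw [kleeneExtension_of_mem hfeas ht₀]
    exact hx _ ht₀
  · simp only [not_exists] at hmeet
    obtain ⟨t, ht⟩ : ∃ t, C (c (t + 1)) (c t) = 0 := by
      by_contra! h
      exact hC ⟨r, c, hc, h⟩
    refine (Finset.prod_eq_zero (Finset.mem_univ t) ?_).le.trans zero_le_one
    simp [completionMatrix, hmeet t, ht]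

end Completion

end MaxTimes

/-- The completion `C̄` of a DAG-supported coefficient matrix `C` with respect to a possible
context (constant nodes `Ks` with positive feasible values `x`) has maximum cycle mean `1`. -/
theorem stmt15 {d : ℕ} (C : Matrix (Fin d) (Fin d) ℝ≥0) (hC : SupportAcyclic C)
    (Ks : Finset (Fin d)) (x : Fin d → ℝ≥0) (hKs : Ks.Nonempty)
    (hx : ∀ k ∈ Ks, 0 < x k)
    (hfeas : ∀ r ∈ Ks, ∀ l ∈ Ks, kleene C r l * x l ≤ x r) :
    maxCycleMean (completionMatrix C Ks x) = 1 := by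
  obtain ⟨k, hk⟩ := hKs
  refine maxCycleMean_eq_one (fun r c hc => cycleWeight_completionMatrix_le_one hC hx hfeas c hc)
    (k := k) ?_
  simp [completionMatrix, hk, div_self (hx k hk).ne']

end
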